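/- arXiv:1707.08981 — 2 statements merged into one kernel-verified Lean document; each statement's English description precedes it below -/
import Mathlib

section
/- For any skew-symmetric n×n integer matrix B and any index k, there exists a matrix E ∈ GL(n,ℤ) such that μ_k(B) = Eᵀ · B · E. In particular the cokernel ℤ^n / B·ℤ^n is isomorphic as an abelian group to ℤ^n / μ_k(B)·ℤ^n. -/
/-- Fomin–Zelevinsky matrix mutation at vertex `k`. -/
def matMutation {n : ℕ} (B : Matrix (Fin n) (Fin n) ℤ) (k : Fin n) :
    Matrix (Fin n) (Fin n) ℤ :=
  Matrix.of fun i j =>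
    if i = k ∨ j = k then -B i j
    else B i j + max (-(B i k)) 0 * B k j + B i k * max (B k j) 0

/-- The congruence matrix: identity except in the `k`-th row. -/
def mutE {n : ℕ} (B : Matrix (Fin n) (Fin n) ℤ) (k : Fin n) : Matrix (Fin n) (Fin n) ℤ :=
  Matrix.of fun i j =>
    (if i = j then (1:ℤ) else 0) +
      (if i = k then (if j = k then -2 else max (-(B j k)) 0) else 0)

lemma mutE_mul_mutE {n : ℕ} (B : Matrix (Fin n) (Fin n) ℤ) (k : Fin n) :
    mutE B k * mutE B k = 1 := by
  ext i j
  simp only [mutE, Matrix.mul_apply, Matrix.of_apply, Matrix.one_apply]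
  simp only [add_mul, mul_add, Finset.sum_add_distrib, ite_mul, mul_ite, zero_mul, mul_zero,
    one_mul, mul_one]
  rw [Finset.sum_ite_eq' Finset.univ j, Finset.sum_ite_eq' Finset.univ k]
  simp only [Finset.mem_univ, if_true]
  by_cases hik : i = k <;> by_cases hjk : j = k <;> simp [hik, hjk] <;> ring_nf

lemma mutE_conj {n : ℕ} (B : Matrix (Fin n) (Fin n) ℤ) (hB : B.transpose = -B) (k : Fin n) :
    matMutation B k = (mutE B k).transpose * B * (mutE B k) := by
  have hskew : ∀ i j, B j i = -B i j := fun i j => by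
    have := congrFun (congrFun hB i) j
    simpa [Matrix.transpose_apply] using this
  have hkk : B k k = 0 := by have := hskew k k; omega
  ext i j
  simp only [matMutation, mutE, Matrix.mul_apply, Matrix.transpose_apply, Matrix.of_apply]
  simp only [add_mul, mul_add, ite_mul, mul_ite, zero_mul, mul_zero, one_mul, mul_one,
    Finset.sum_add_distrib, Finset.sum_ite_eq', Finset.sum_ite_eq, Finset.mem_univ, if_true]
  by_cases hik : i = k <;> by_cases hjk : j = k <;>
    simp only [hik, hjk, hkk, if_true, if_false, eq_self_iff_true, or_true, true_or,
      or_self, not_true, not_false_iff]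
  · omega
  · omega
  · omega
  · rw [show -B j k = B k j from by have := hskew j k; omega]; ring

theorem mutation_congruent_and_coker_iso {n : ℕ} (B : Matrix (Fin n) (Fin n) ℤ)
    (hB : B.transpose = -B) (k : Fin n) :
    (∃ E : Matrix (Fin n) (Fin n) ℤ, IsUnit E.det ∧
        matMutation B k = E.transpose * B * E) ∧
    Nonempty (((Fin n → ℤ) ⧸ LinearMap.range B.mulVecLin) ≃+
        ((Fin n → ℤ) ⧸ LinearMap.range (matMutation B k).mulVecLin)) := by
  set E := mutE B k with hE
  have hE2 : E * E = 1 := mutE_mul_mutE B k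
  have hconj : matMutation B k = E.transpose * B * E := mutE_conj B hB k
  have hdet : IsUnit E.det :=
    IsUnit.of_mul_eq_one _ (by rw [← Matrix.det_mul, hE2, Matrix.det_one])
  have hET : E.transpose * E.transpose = 1 := by
    rw [← Matrix.transpose_mul, hE2, Matrix.transpose_one]
  refine ⟨⟨E, hdet, hconj⟩, ?_⟩
  -- the linear equivalence given by multiplication by `Eᵀ`
  have hinv : ∀ x : Fin n → ℤ,
      E.transpose.mulVecLin (E.transpose.mulVecLin x) = x := fun x => by
    simp [Matrix.mulVecLin_apply, Matrix.mulVec_mulVec, hET, hE2]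
  let e : (Fin n → ℤ) ≃ₗ[ℤ] (Fin n → ℤ) :=
    { E.transpose.mulVecLin with
      invFun := E.transpose.mulVecLin
      left_inv := hinv
      right_inv := hinv }
  have hEsurj : LinearMap.range E.mulVecLin = ⊤ := by
    rw [LinearMap.range_eq_top]
    intro y
    exact ⟨E.mulVecLin y, by simp [Matrix.mulVecLin_apply, Matrix.mulVec_mulVec, hE2]⟩
  have hrange : Submodule.map e.toLinearMap (LinearMap.range B.mulVecLin) =
      LinearMap.range (matMutation B k).mulVecLin := by
    rw [hconj, Matrix.mulVecLin_mul, Matrix.mulVecLin_mul, LinearMap.range_comp,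
      hEsurj, Submodule.map_top, LinearMap.range_comp]
  exact ⟨(Submodule.Quotient.equiv _ _ e hrange).toAddEquiv⟩
end

section
/- The cluster algebra of type A₂ has exactly 5 cluster variables: with a₁ = x₁, a₂ = x₂ and a_{n+1} = (1+a_n)/a_{n-1}, the set {a_n : n ∈ ℕ} equals { x₁, x₂, (1+x₂)/x₁, (1+x₁+x₂)/(x₁x₂), (1+x₁)/x₂ } and has cardinality 5. -/
/-- The field `ℚ(x₁, x₂)` of rational functions in two indeterminates. -/
abbrev RatFunc2 : Type := FractionRing (MvPolynomial (Fin 2) ℚ)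

/-- The image of the indeterminate `xᵢ` in `ℚ(x₁, x₂)`. -/
noncomputable def xv (i : Fin 2) : RatFunc2 :=
  algebraMap (MvPolynomial (Fin 2) ℚ) RatFunc2 (MvPolynomial.X i)

/-- Two polynomials with different values at `(2,5)` have different images in `ℚ(x₁,x₂)`. -/
lemma ratFunc2_ne_of_eval_ne (p q : MvPolynomial (Fin 2) ℚ)
    (h : MvPolynomial.eval ![2,5] p ≠ MvPolynomial.eval ![2,5] q) :
    algebraMap (MvPolynomial (Fin 2) ℚ) RatFunc2 p ≠
      algebraMap (MvPolynomial (Fin 2) ℚ) RatFunc2 q :=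
  fun he => h (congrArg _ (IsFractionRing.injective (MvPolynomial (Fin 2) ℚ) RatFunc2 he))

lemma xv_z1 : xv 0 ≠ 0 := by
  have := ratFunc2_ne_of_eval_ne (MvPolynomial.X 0) 0 (by norm_num)
  simpa only [xv, map_zero] using this

lemma xv_z2 : xv 1 ≠ 0 := by
  have := ratFunc2_ne_of_eval_ne (MvPolynomial.X 1) 0 (by norm_num)
  simpa only [xv, map_zero] using this

lemma xv_z3 : 1 + xv 0 ≠ 0 := by
  have := ratFunc2_ne_of_eval_ne (1 + MvPolynomial.X 0) 0 (by norm_num)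
  simpa only [xv, map_zero, map_add, map_one] using this

lemma xv_z4 : 1 + xv 1 ≠ 0 := by
  have := ratFunc2_ne_of_eval_ne (1 + MvPolynomial.X 1) 0 (by norm_num)
  simpa only [xv, map_zero, map_add, map_one] using this

lemma xv_z5 : 1 + xv 0 + xv 1 ≠ 0 := by
  have := ratFunc2_ne_of_eval_ne (1 + MvPolynomial.X 0 + MvPolynomial.X 1) 0 (by norm_num)
  simpa only [xv, map_zero, map_add, map_one] using this

lemma xv_n1 : xv 0 ≠ xv 1 := by
  have := ratFunc2_ne_of_eval_ne (MvPolynomial.X 0) (MvPolynomial.X 1) (by norm_num)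
  simpa only [xv] using this

lemma xv_n2 : xv 0 * xv 0 ≠ 1 + xv 1 := by
  have := ratFunc2_ne_of_eval_ne (MvPolynomial.X 0 * MvPolynomial.X 0)
    (1 + MvPolynomial.X 1) (by norm_num)
  simpa only [xv, map_mul, map_add, map_one] using this

lemma xv_n3 : xv 0 * (xv 0 * xv 1) ≠ 1 + xv 0 + xv 1 := by
  have := ratFunc2_ne_of_eval_ne (MvPolynomial.X 0 * (MvPolynomial.X 0 * MvPolynomial.X 1))
    (1 + MvPolynomial.X 0 + MvPolynomial.X 1) (by norm_num)
  simpa only [xv, map_mul, map_add, map_one] using this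

lemma xv_n4 : xv 0 * xv 1 ≠ 1 + xv 0 := by
  have := ratFunc2_ne_of_eval_ne (MvPolynomial.X 0 * MvPolynomial.X 1)
    (1 + MvPolynomial.X 0) (by norm_num)
  simpa only [xv, map_mul, map_add, map_one] using this

lemma xv_n5 : xv 1 * xv 0 ≠ 1 + xv 1 := by
  have := ratFunc2_ne_of_eval_ne (MvPolynomial.X 1 * MvPolynomial.X 0)
    (1 + MvPolynomial.X 1) (by norm_num)
  simpa only [xv, map_mul, map_add, map_one] using this

lemma xv_n6 : xv 1 * (xv 0 * xv 1) ≠ 1 + xv 0 + xv 1 := by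
  have := ratFunc2_ne_of_eval_ne (MvPolynomial.X 1 * (MvPolynomial.X 0 * MvPolynomial.X 1))
    (1 + MvPolynomial.X 0 + MvPolynomial.X 1) (by norm_num)
  simpa only [xv, map_mul, map_add, map_one] using this

lemma xv_n7 : xv 1 * xv 1 ≠ 1 + xv 0 := by
  have := ratFunc2_ne_of_eval_ne (MvPolynomial.X 1 * MvPolynomial.X 1)
    (1 + MvPolynomial.X 0) (by norm_num)
  simpa only [xv, map_mul, map_add, map_one] using this

lemma xv_n8 : (1 + xv 1) * (xv 0 * xv 1) ≠ (1 + xv 0 + xv 1) * xv 0 := by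
  have := ratFunc2_ne_of_eval_ne
    ((1 + MvPolynomial.X 1) * (MvPolynomial.X 0 * MvPolynomial.X 1))
    ((1 + MvPolynomial.X 0 + MvPolynomial.X 1) * MvPolynomial.X 0) (by norm_num)
  simpa only [xv, map_mul, map_add, map_one] using this

lemma xv_n9 : (1 + xv 1) * xv 1 ≠ (1 + xv 0) * xv 0 := by
  have := ratFunc2_ne_of_eval_ne ((1 + MvPolynomial.X 1) * MvPolynomial.X 1)
    ((1 + MvPolynomial.X 0) * MvPolynomial.X 0) (by norm_num)
  simpa only [xv, map_mul, map_add, map_one] using this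

lemma xv_n10 : (1 + xv 0 + xv 1) * xv 1 ≠ (1 + xv 0) * (xv 0 * xv 1) := by
  have := ratFunc2_ne_of_eval_ne
    ((1 + MvPolynomial.X 0 + MvPolynomial.X 1) * MvPolynomial.X 1)
    ((1 + MvPolynomial.X 0) * (MvPolynomial.X 0 * MvPolynomial.X 1)) (by norm_num)
  simpa only [xv, map_mul, map_add, map_one] using this

lemma xv_id2 : (1 + (1 + xv 1) / xv 0) / xv 1 = (1 + xv 0 + xv 1) / (xv 0 * xv 1) := by
  have z1 := xv_z1; have z2 := xv_z2
  field_simp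
  ring

lemma xv_id3 :
    (1 + (1 + xv 0 + xv 1) / (xv 0 * xv 1)) / ((1 + xv 1) / xv 0) = (1 + xv 0) / xv 1 := by
  have z1 := xv_z1; have z2 := xv_z2; have z4 := xv_z4
  rw [div_eq_iff (div_ne_zero xv_z4 xv_z1)]
  field_simp
  ring

lemma xv_id4 :
    (1 + (1 + xv 0) / xv 1) / ((1 + xv 0 + xv 1) / (xv 0 * xv 1)) = xv 0 := by
  have z1 := xv_z1; have z2 := xv_z2; have z5 := xv_z5
  rw [div_eq_iff (div_ne_zero xv_z5 (mul_ne_zero xv_z1 xv_z2))]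
  field_simp
  ring

lemma xv_id5 : (1 + xv 0) / ((1 + xv 0) / xv 1) = xv 1 := by
  rw [div_div_eq_mul_div, mul_comm, mul_div_assoc, div_self xv_z3, mul_one]

set_option maxHeartbeats 1000000 in
theorem a2_five_cluster_variables (a : ℕ → RatFunc2)
    (h1 : a 1 = xv 0) (h2 : a 2 = xv 1)
    (hrec : ∀ n, 2 ≤ n → a (n + 1) = (1 + a n) / a (n - 1)) :
    {y : RatFunc2 | ∃ n, 1 ≤ n ∧ a n = y} =
      ({xv 0, xv 1, (1 + xv 1) / xv 0, (1 + xv 0 + xv 1) / (xv 0 * xv 1),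
        (1 + xv 0) / xv 1} : Set RatFunc2) ∧
    ({xv 0, xv 1, (1 + xv 1) / xv 0, (1 + xv 0 + xv 1) / (xv 0 * xv 1),
        (1 + xv 0) / xv 1} : Set RatFunc2).ncard = 5 := by
  have z1 := xv_z1
  have z2 := xv_z2
  have zxy : xv 0 * xv 1 ≠ 0 := mul_ne_zero z1 z2
  -- pairwise distinctness of the five elements
  have hAB : xv 0 ≠ xv 1 := xv_n1
  have hAC : xv 0 ≠ (1 + xv 1) / xv 0 := fun h => xv_n2 ((eq_div_iff z1).mp h)
  have hAD : xv 0 ≠ (1 + xv 0 + xv 1) / (xv 0 * xv 1) := fun h => xv_n3 ((eq_div_iff zxy).mp h)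
  have hAE : xv 0 ≠ (1 + xv 0) / xv 1 := fun h => xv_n4 ((eq_div_iff z2).mp h)
  have hBC : xv 1 ≠ (1 + xv 1) / xv 0 := fun h => xv_n5 ((eq_div_iff z1).mp h)
  have hBD : xv 1 ≠ (1 + xv 0 + xv 1) / (xv 0 * xv 1) := fun h => xv_n6 ((eq_div_iff zxy).mp h)
  have hBE : xv 1 ≠ (1 + xv 0) / xv 1 := fun h => xv_n7 ((eq_div_iff z2).mp h)
  have hCD : (1 + xv 1) / xv 0 ≠ (1 + xv 0 + xv 1) / (xv 0 * xv 1) :=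
    fun h => xv_n8 ((div_eq_div_iff z1 zxy).mp h)
  have hCE : (1 + xv 1) / xv 0 ≠ (1 + xv 0) / xv 1 :=
    fun h => xv_n9 ((div_eq_div_iff z1 z2).mp h)
  have hDE : (1 + xv 0 + xv 1) / (xv 0 * xv 1) ≠ (1 + xv 0) / xv 1 :=
    fun h => xv_n10 ((div_eq_div_iff zxy z2).mp h)
  -- the period-5 block
  have block : ∀ q : ℕ, a (5*q+1) = xv 0 ∧ a (5*q+2) = xv 1 ∧
      a (5*q+3) = (1 + xv 1) / xv 0 ∧
      a (5*q+4) = (1 + xv 0 + xv 1) / (xv 0 * xv 1) ∧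
      a (5*q+5) = (1 + xv 0) / xv 1 := by
    intro q
    induction q with
    | zero =>
      have e3 : a 3 = (1 + xv 1) / xv 0 := by
        have h := hrec 2 (by norm_num)
        norm_num at h
        rw [h, h2, h1]
      have e4 : a 4 = (1 + xv 0 + xv 1) / (xv 0 * xv 1) := by
        have h := hrec 3 (by norm_num)
        norm_num at h
        rw [h, e3, h2, xv_id2]
      have e5 : a 5 = (1 + xv 0) / xv 1 := by
        have h := hrec 4 (by norm_num)
        norm_num at h
        rw [h, e4, e3, xv_id3]
      exact ⟨by simpa using h1, by simpa using h2, by simpa using e3,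
        by simpa using e4, by simpa using e5⟩
    | succ q ih =>
      obtain ⟨i1, i2, i3, i4, i5⟩ := ih
      have e1 : a (5*(q+1)+1) = xv 0 := by
        have h := hrec (5*q+5) (by omega)
        rw [show 5*(q+1)+1 = 5*q+5+1 by omega, h,
          show 5*q+5-1 = 5*q+4 by omega, i4, i5, xv_id4]
      have e2 : a (5*(q+1)+2) = xv 1 := by
        have h := hrec (5*q+6) (by omega)
        rw [show 5*(q+1)+2 = 5*q+6+1 by omega, h,
          show 5*q+6-1 = 5*q+5 by omega, i5,
          show 5*q+6 = 5*(q+1)+1 by omega, e1, xv_id5]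
      have e3 : a (5*(q+1)+3) = (1 + xv 1) / xv 0 := by
        have h := hrec (5*q+7) (by omega)
        rw [show 5*(q+1)+3 = 5*q+7+1 by omega, h,
          show 5*q+7-1 = 5*(q+1)+1 by omega, e1,
          show 5*q+7 = 5*(q+1)+2 by omega, e2]
      have e4 : a (5*(q+1)+4) = (1 + xv 0 + xv 1) / (xv 0 * xv 1) := by
        have h := hrec (5*q+8) (by omega)
        rw [show 5*(q+1)+4 = 5*q+8+1 by omega, h,
          show 5*q+8-1 = 5*(q+1)+2 by omega, e2,
          show 5*q+8 = 5*(q+1)+3 by omega, e3, xv_id2]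
      have e5 : a (5*(q+1)+5) = (1 + xv 0) / xv 1 := by
        have h := hrec (5*q+9) (by omega)
        rw [show 5*(q+1)+5 = 5*q+9+1 by omega, h,
          show 5*q+9-1 = 5*(q+1)+3 by omega, e3,
          show 5*q+9 = 5*(q+1)+4 by omega, e4, xv_id3]
      exact ⟨e1, e2, e3, e4, e5⟩
  constructor
  · ext z
    simp only [Set.mem_setOf_eq, Set.mem_insert_iff, Set.mem_singleton_iff]
    constructor
    · rintro ⟨n, hn, rfl⟩
      set q := (n-1)/5 with hq
      set r := (n-1)%5 with hr
      have hr5 : r < 5 := Nat.mod_lt _ (by norm_num)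
      have hnq : n = 5*q + r + 1 := by omega
      obtain ⟨i1, i2, i3, i4, i5⟩ := block q
      interval_cases r
      · exact Or.inl (by rw [hnq]; simpa using i1)
      · exact Or.inr (Or.inl (by rw [hnq]; simpa using i2))
      · exact Or.inr (Or.inr (Or.inl (by rw [hnq]; simpa using i3)))
      · exact Or.inr (Or.inr (Or.inr (Or.inl (by rw [hnq]; simpa using i4))))
      · exact Or.inr (Or.inr (Or.inr (Or.inr (by rw [hnq]; simpa using i5))))
    · obtain ⟨i1, i2, i3, i4, i5⟩ := block 0
      rintro (rfl | rfl | rfl | rfl | rfl)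
      · exact ⟨1, le_refl _, by simpa using i1⟩
      · exact ⟨2, by norm_num, by simpa using i2⟩
      · exact ⟨3, by norm_num, by simpa using i3⟩
      · exact ⟨4, by norm_num, by simpa using i4⟩
      · exact ⟨5, by norm_num, by simpa using i5⟩
  · rw [Set.ncard_insert_of_notMem (by simp [hAB, hAC, hAD, hAE]),
      Set.ncard_insert_of_notMem (by simp [hBC, hBD, hBE]),
      Set.ncard_insert_of_notMem (by simp [hCD, hCE]),
      Set.ncard_pair hDE]
end
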